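/- Let X be an Archimedean pervasive pre-Riesz space with vector lattice cover (Y, i), let I ⊆ X be a directed ideal, and let Î ⊆ Y be its smallest extension ideal. Then i(I) is order dense in Î; consequently (Î, i|_I) is a vector lattice cover of I, and I is pervasive. -/

import Mathlib

/-!
Since `I` is directed, the ideal `{y | |y| ≤ i z for some z ∈ I}` of `Y` pulls back to `I`, so
by minimality `Î` is majorized by `i(I)`. Pervasiveness of `X` and solidity of `Î` put an element
of `i(I)` below every positive element of `Î`. If a lower bound `z ∈ Î` of
`{w ∈ i(I) | y ≤ w}` were not below `y`, that set would be invariant under subtracting some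
`i e` with `0 < i e ≤ (z - y)⁺`, which the Archimedean property forbids.
-/

open Set

section Defs

variable {Z : Type*} [AddCommGroup Z] [PartialOrder Z] [Module ℝ Z]

/-- Set of common upper bounds of `x` and `-x`. -/
def pmUB (x : Z) : Set Z := upperBounds {x, -x}

/-- Disjointness in an ordered vector space: `{±(x+y)}ᵘ = {±(x−y)}ᵘ`. -/
def Disj (x y : Z) : Prop :=
  upperBounds {x + y, -(x + y)} = upperBounds {x - y, -(x - y)}

/-- Disjoint complement of a set. -/
def dcomp (M : Set Z) : Set Z := {x : Z | ∀ y ∈ M, Disj x y}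

/-- `D` is a linear subspace. -/
def IsSubsp (D : Set Z) : Prop :=
  (0 : Z) ∈ D ∧ (∀ x ∈ D, ∀ y ∈ D, x + y ∈ D) ∧ ∀ (r : ℝ), ∀ x ∈ D, r • x ∈ D

/-- A band is a linear subspace `B` with `Bᵈᵈ = B`. -/
def IsBand (B : Set Z) : Prop := IsSubsp B ∧ dcomp (dcomp B) = B

/-- `M` is solid: `{±y}ᵘ ⊆ {±x}ᵘ` with `y ∈ M` implies `x ∈ M`. -/
def IsSolid (M : Set Z) : Prop := ∀ x : Z, ∀ y ∈ M, pmUB y ⊆ pmUB x → x ∈ M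

/-- An ideal is a solid linear subspace. -/
def IsIdeal (I : Set Z) : Prop := IsSubsp I ∧ IsSolid I

/-- The ideal generated by `S`. -/
def idealGen (S : Set Z) : Set Z := ⋂₀ {I : Set Z | IsIdeal I ∧ S ⊆ I}

/-- The band generated by `S`. -/
def bandGen (S : Set Z) : Set Z := ⋂₀ {B : Set Z | IsBand B ∧ S ⊆ B}

/-- A subset is directed if any two elements have a common upper bound in it. -/
def IsDirectedSet (D : Set Z) : Prop := ∀ x ∈ D, ∀ y ∈ D, ∃ z ∈ D, x ≤ z ∧ y ≤ z

/-- `D` is order dense in `E` (infima taken within `E`): every `y ∈ E` is the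
infimum, computed in `E`, of `{w ∈ D | y ≤ w}`. -/
def OrderDenseIn (D E : Set Z) : Prop :=
  ∀ y ∈ E, y ∈ lowerBounds {w : Z | w ∈ D ∧ y ≤ w} ∧
    ∀ z ∈ E, z ∈ lowerBounds {w : Z | w ∈ D ∧ y ≤ w} → z ≤ y

/-- `D` is majorizing in `E`. -/
def MajorizingIn (D E : Set Z) : Prop := ∀ y ∈ E, ∃ d ∈ D, y ≤ d

end Defs

section OrderedGroup

variable {Z : Type*} [AddCommGroup Z] [PartialOrder Z]

lemma mem_pmUB {x u : Z} : u ∈ pmUB x ↔ x ≤ u ∧ -x ≤ u := by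
  simp [pmUB, upperBounds]

lemma IsSolid.mem_of_le_of_neg_le {M : Set Z} (hM : IsSolid M) {x z : Z} (hz : z ∈ M)
    (hxz : x ≤ z) (hxz' : -x ≤ z) : x ∈ M :=
  hM x z hz fun _ hu ↦
    mem_pmUB.2 ⟨hxz.trans (mem_pmUB.1 hu).1, hxz'.trans (mem_pmUB.1 hu).1⟩

end OrderedGroup

section Subspace

variable {Z : Type*} [AddCommGroup Z] [Module ℝ Z]

lemma IsSubsp.neg_mem {D : Set Z} (hD : IsSubsp D) {x : Z} (hx : x ∈ D) : -x ∈ D := by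
  simpa using hD.2.2 (-1) x hx

lemma IsSubsp.sub_mem {D : Set Z} (hD : IsSubsp D) {x y : Z} (hx : x ∈ D) (hy : y ∈ D) :
    x - y ∈ D := by
  simpa [sub_eq_add_neg] using hD.2.1 x hx (-y) (hD.neg_mem hy)

end Subspace

section VectorLattice

variable {Y : Type*} [AddCommGroup Y] [Lattice Y]

lemma mem_pmUB_iff_abs_le {y u : Y} : u ∈ pmUB y ↔ |y| ≤ u :=
  mem_pmUB.trans abs_le'.symm

lemma IsSolid.mem_of_abs_le {M : Set Y} (hM : IsSolid M) {v w : Y} (hv : v ∈ M)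
    (hwv : |w| ≤ |v|) : w ∈ M :=
  hM w v hv fun _ hu ↦ mem_pmUB_iff_abs_le.2 (hwv.trans (mem_pmUB_iff_abs_le.1 hu))

lemma abs_smul_le_abs_smul_of_abs_le [Module ℝ Y] [PosSMulMono ℝ Y] (r : ℝ) {y v : Y}
    (h : |y| ≤ v) : |r • y| ≤ |r| • v := by
  obtain ⟨hyv, hyv'⟩ := abs_le'.1 h
  rcases le_total 0 r with hr | hr
  · rw [abs_of_nonneg hr, abs_le', ← smul_neg]
    exact ⟨smul_le_smul_of_nonneg_left hyv hr, smul_le_smul_of_nonneg_left hyv' hr⟩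
  · have hr' : 0 ≤ -r := neg_nonneg.2 hr
    rw [abs_of_nonpos hr, abs_le', ← neg_smul_neg r y, ← smul_neg, neg_neg]
    exact ⟨smul_le_smul_of_nonneg_left hyv' hr', smul_le_smul_of_nonneg_left hyv hr'⟩

variable [AddLeftMono Y]

lemma IsSolid.mem_of_nonneg_of_le {M : Set Y} (hM : IsSolid M) {v w : Y} (hv : v ∈ M)
    (hw : 0 ≤ w) (hwv : w ≤ v) : w ∈ M :=
  hM.mem_of_abs_le hv (by rwa [abs_of_nonneg hw, abs_of_nonneg (hw.trans hwv)])

lemma IsSolid.posPart_mem {M : Set Y} (hM : IsSolid M) {y : Y} (hy : y ∈ M) : y⁺ ∈ M :=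
  hM.mem_of_abs_le hy <| by
    rw [abs_of_nonneg (posPart_nonneg y)]
    exact sup_le (le_abs_self y) (abs_nonneg y)

end VectorLattice

lemma le_zero_of_sub_mem_of_archimedean {X : Type*} [AddCommGroup X] [PartialOrder X]
    [AddLeftMono X] (harch : ∀ x y : X, (∀ n : ℕ, n • x ≤ y) → x ≤ 0) {S : Set X}
    {a c e : X} (ha : a ∈ S) (hc : ∀ b ∈ S, c ≤ b) (hS : ∀ b ∈ S, b - e ∈ S) : e ≤ 0 := by
  have hmem : ∀ n : ℕ, a - n • e ∈ S := by
    intro n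
    induction n with
    | zero => simpa using ha
    | succ n ih => simpa [succ_nsmul, sub_add_eq_sub_sub] using hS _ ih
  exact harch e (a - c) fun n ↦ by
    simpa [le_sub_comm] using hc _ (hmem n)

section Cover

variable {X Y : Type*} [AddCommGroup X] [Module ℝ X]
  [AddCommGroup Y] [Lattice Y] [AddLeftMono Y] [Module ℝ Y] {i : X →ₗ[ℝ] Y}

variable (i) in
def absDominated (I : Set X) : Set Y := {y | ∃ z ∈ I, |y| ≤ i z}

lemma isIdeal_absDominated [PosSMulMono ℝ Y] {I : Set X} (hI : IsSubsp I) :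
    IsIdeal (absDominated i I) := by
  refine ⟨⟨⟨0, hI.1, by simp⟩, ?_, ?_⟩, ?_⟩
  · rintro y₁ ⟨z₁, hz₁, h₁⟩ y₂ ⟨z₂, hz₂, h₂⟩
    exact ⟨z₁ + z₂, hI.2.1 z₁ hz₁ z₂ hz₂,
      (abs_add_le y₁ y₂).trans (by simpa using add_le_add h₁ h₂)⟩
  · rintro r y ⟨z, hz, h⟩
    exact ⟨|r| • z, hI.2.2 _ z hz, by simpa using abs_smul_le_abs_smul_of_abs_le r h⟩
  · rintro w y ⟨z, hz, h⟩ hyw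
    exact ⟨z, hz, mem_pmUB_iff_abs_le.1 (hyw (mem_pmUB_iff_abs_le.2 h))⟩

lemma exists_mem_pos_le_of_pervasive (hperv : ∀ y : Y, 0 < y → ∃ x : X, 0 < i x ∧ i x ≤ y)
    {I : Set X} {Ihat : Set Y} (hIhat : IsSolid Ihat) (hext : i ⁻¹' Ihat = I) {y : Y}
    (hy : y ∈ Ihat) (hpos : 0 < y) : ∃ x ∈ I, 0 < i x ∧ i x ≤ y := by
  obtain ⟨x, hx, hxy⟩ := hperv y hpos
  exact ⟨x, hext ▸ hIhat.mem_of_nonneg_of_le hy hx.le hxy, hx, hxy⟩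

variable [PartialOrder X] [AddLeftMono X]

lemma map_le_map_iff_of_bipositive (hbi : ∀ x : X, 0 ≤ i x ↔ 0 ≤ x) {a b : X} :
    i a ≤ i b ↔ a ≤ b := by
  rw [← sub_nonneg, ← map_sub, hbi, sub_nonneg]

lemma preimage_absDominated (hbi : ∀ x : X, 0 ≤ i x ↔ 0 ≤ x) {I : Set X} (hI : IsIdeal I)
    (hdir : IsDirectedSet I) : i ⁻¹' absDominated i I = I := by
  ext x
  constructor
  · rintro ⟨z, hz, hxz⟩
    obtain ⟨h₁, h₂⟩ := abs_le'.1 hxz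
    rw [← map_neg, map_le_map_iff_of_bipositive hbi] at h₂
    exact hI.2.mem_of_le_of_neg_le hz ((map_le_map_iff_of_bipositive hbi).1 h₁) h₂
  · intro hx
    obtain ⟨z, hz, h₁, h₂⟩ := hdir x hx (-x) (hI.1.neg_mem hx)
    refine ⟨z, hz, abs_le'.2 ⟨?_, ?_⟩⟩
    · exact (map_le_map_iff_of_bipositive hbi).2 h₁
    · rw [← map_neg]; exact (map_le_map_iff_of_bipositive hbi).2 h₂

lemma majorizingIn_image_of_isDirectedSet [PosSMulMono ℝ Y]
    (hbi : ∀ x : X, 0 ≤ i x ↔ 0 ≤ x) {I : Set X} (hI : IsIdeal I) (hdir : IsDirectedSet I)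
    {Ihat : Set Y} (hsmall : ∀ J : Set Y, IsIdeal J → i ⁻¹' J = I → Ihat ⊆ J) :
    MajorizingIn (i '' I) Ihat := by
  intro y hy
  obtain ⟨z, hz, hyz⟩ :=
    hsmall _ (isIdeal_absDominated hI.1) (preimage_absDominated hbi hI hdir) hy
  exact ⟨i z, mem_image_of_mem i hz, (le_abs_self y).trans hyz⟩

lemma orderDenseIn_image (hbi : ∀ x : X, 0 ≤ i x ↔ 0 ≤ x)
    (harch : ∀ x y : X, (∀ n : ℕ, n • x ≤ y) → x ≤ 0)
    (hperv : ∀ y : Y, 0 < y → ∃ x : X, 0 < i x ∧ i x ≤ y) {I : Set X} (hI : IsSubsp I)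
    {Ihat : Set Y} (hIhat : IsIdeal Ihat) (hext : i ⁻¹' Ihat = I)
    (hmaj : MajorizingIn (i '' I) Ihat) : OrderDenseIn (i '' I) Ihat := by
  intro y hy
  refine ⟨fun _ hw ↦ hw.2, fun z hz hzU ↦ ?_⟩
  by_contra hzy
  have hpos : 0 < (z - y)⁺ :=
    (posPart_nonneg _).lt_of_ne' (by rwa [Ne, posPart_eq_zero, sub_nonpos])
  obtain ⟨e, heI, he, hez⟩ := exists_mem_pos_le_of_pervasive hperv hIhat.2 hext
    (hIhat.2.posPart_mem (hIhat.1.sub_mem hz hy)) hpos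
  obtain ⟨_, ⟨a, ha, rfl⟩, hya⟩ := hmaj y hy
  obtain ⟨_, ⟨c, -, rfl⟩, hyc⟩ := hmaj (-y) (hIhat.1.neg_mem hy)
  have hlower : ∀ b ∈ {b ∈ I | y ≤ i b}, -c ≤ b := fun b hb ↦
    (map_le_map_iff_of_bipositive hbi).1 (by rw [map_neg]; exact (neg_le.1 hyc).trans hb.2)
  have hstep : ∀ b ∈ {b ∈ I | y ≤ i b}, b - e ∈ {b ∈ I | y ≤ i b} := by
    rintro b ⟨hb, hyb⟩
    refine ⟨hI.sub_mem hb heI, ?_⟩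
    rw [map_sub, le_sub_comm]
    exact hez.trans (sup_le (sub_le_sub_right (hzU ⟨⟨b, hb, rfl⟩, hyb⟩) y) (sub_nonneg.2 hyb))
  have he0 := le_zero_of_sub_mem_of_archimedean harch (S := {b ∈ I | y ≤ i b}) ⟨ha, hya⟩
    hlower hstep
  exact he.not_ge (by simpa using (map_le_map_iff_of_bipositive hbi).2 he0)

end Cover

theorem stmt_16_general {X Y : Type*} [AddCommGroup X] [PartialOrder X] [CovariantClass X X (· + ·) (· ≤ ·)] [Module ℝ X] [AddCommGroup Y] [Lattice Y] [CovariantClass Y Y (· + ·) (· ≤ ·)] [Module ℝ Y] [PosSMulMono ℝ Y]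
    (i : X →ₗ[ℝ] Y) (hbi : ∀ x : X, 0 ≤ i x ↔ 0 ≤ x)
    (harch : ∀ x y : X, (∀ n : ℕ, n • x ≤ y) → x ≤ 0)
    (hperv : ∀ y : Y, 0 < y → ∃ x : X, 0 < i x ∧ i x ≤ y)
    (I : Set X) (hI : IsIdeal I) (hdir : IsDirectedSet I)
    (Ihat : Set Y) (hIhat : IsIdeal Ihat) (hext : i ⁻¹' Ihat = I)
    (hsmall : ∀ J : Set Y, IsIdeal J → i ⁻¹' J = I → Ihat ⊆ J) :
    OrderDenseIn (i '' I) Ihat ∧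
      ∀ y ∈ Ihat, 0 < y → ∃ x ∈ I, 0 < i x ∧ i x ≤ y :=
  ⟨orderDenseIn_image hbi harch hperv hI.1 hIhat hext
      (majorizingIn_image_of_isDirectedSet hbi hI hdir hsmall),
    fun _ hy ↦ exists_mem_pos_le_of_pervasive hperv hIhat.2 hext hy⟩

/-- For a directed ideal I in an Archimedean pervasive pre-Riesz space, i(I) is
order dense in the smallest extension ideal Î (so Î is a vector lattice cover
of I), and I is pervasive (in Î). -/
theorem stmt_16 {X Y : Type*} [AddCommGroup X] [PartialOrder X] [CovariantClass X X (· + ·) (· ≤ ·)] [Module ℝ X] [PosSMulMono ℝ X] [AddCommGroup Y] [Lattice Y] [CovariantClass Y Y (· + ·) (· ≤ ·)] [Module ℝ Y] [PosSMulMono ℝ Y]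
    (i : X →ₗ[ℝ] Y) (hbi : ∀ x : X, 0 ≤ i x ↔ 0 ≤ x)
    (hdense : ∀ y : Y, IsGLB {z : Y | z ∈ Set.range i ∧ y ≤ z} y)
    (harch : ∀ x y : X, (∀ n : ℕ, n • x ≤ y) → x ≤ 0)
    (hperv : ∀ y : Y, 0 < y → ∃ x : X, 0 < i x ∧ i x ≤ y)
    (I : Set X) (hI : IsIdeal I) (hdir : IsDirectedSet I)
    (Ihat : Set Y) (hIhat : IsIdeal Ihat) (hext : i ⁻¹' Ihat = I)
    (hsmall : ∀ J : Set Y, IsIdeal J → i ⁻¹' J = I → Ihat ⊆ J) :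
    OrderDenseIn (i '' I) Ihat ∧
      ∀ y ∈ Ihat, 0 < y → ∃ x ∈ I, 0 < i x ∧ i x ≤ y :=
  stmt_16_general i hbi harch hperv I hI hdir Ihat hIhat hext hsmall
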